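/- arXiv:2509.09269 — 7 statements merged into one kernel-verified Lean document; each statement's English description precedes it below -/
import Mathlib

section
/- Let T > 0 be a real number. For every real a with a·T < 1, there exists a unique real number k with k > |a| satisfying T·√(k² − a²) = arccos(a/k). -/
/-!
Write `φ(k) = T √(k² - a²) - arccos (a / k)` for `k ≥ |a|`. Its derivative is
`(T k² - a) / (k √(k² - a²))`, so `φ` decreases up to `√(a / T)` and increases afterwards.
Since `φ(|a|) = -arccos (a / |a|) ≤ 0`, `φ` has no zero before the turning point
`c = max |a| √(a / T)`, where it is negative (for `a > 0` because `aT < 1` puts `√(a / T)` beyond `a`),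
while `φ(k) > 0` as soon as `T (k - |a|) > π`. The intermediate value theorem and strict monotonicity
on `[c, ∞)` give exactly one zero.
-/

open Real Set

namespace DelayFeedback

noncomputable def phaseDefect (T a k : ℝ) : ℝ :=
  T * √(k ^ 2 - a ^ 2) - arccos (a / k)

variable {T a k : ℝ}

lemma phaseDefect_eq_zero_iff :
    phaseDefect T a k = 0 ↔ T * √(k ^ 2 - a ^ 2) = arccos (a / k) :=
  sub_eq_zero

lemma hasDerivAt_phaseDefect (T : ℝ) (hk : |a| < k) :
    HasDerivAt (phaseDefect T a) ((T * k ^ 2 - a) / (k * √(k ^ 2 - a ^ 2))) k := by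
  have hk0 : 0 < k := (abs_nonneg a).trans_lt hk
  have hpos : 0 < k ^ 2 - a ^ 2 := by nlinarith [sq_abs a, abs_nonneg a]
  obtain ⟨hlo, hhi⟩ := abs_lt.mp <| show |a / k| < 1 by
    rwa [abs_div, abs_of_pos hk0, div_lt_one hk0]
  have hsqrt : HasDerivAt (fun x : ℝ => T * √(x ^ 2 - a ^ 2))
      (T * ((2 * k) / (2 * √(k ^ 2 - a ^ 2)))) k := by
    have h := ((hasDerivAt_pow 2 k).sub_const (a ^ 2)).sqrt hpos.ne'
    simpa using h.const_mul T
  have hquot : HasDerivAt (fun x : ℝ => a / x) (a * -(k ^ 2)⁻¹) k := by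
    simpa [div_eq_mul_inv] using (hasDerivAt_inv hk0.ne').const_mul a
  have hsqrt_one_sub : √(1 - (a / k) ^ 2) = √(k ^ 2 - a ^ 2) / k := by
    rw [show 1 - (a / k) ^ 2 = (k ^ 2 - a ^ 2) / k ^ 2 by field_simp,
      sqrt_div hpos.le, sqrt_sq hk0.le]
  refine (hsqrt.sub ((hasDerivAt_arccos hlo.ne' hhi.ne).comp k hquot)).congr_deriv ?_
  rw [hsqrt_one_sub]
  field_simp

lemma continuousOn_phaseDefect (T a : ℝ) : ContinuousOn (phaseDefect T a) (Ici |a|) := by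
  have hquot : ContinuousOn (fun k : ℝ => a / k) (Ici |a|) := by
    rcases eq_or_ne a 0 with rfl | ha
    · simpa using continuousOn_const
    · exact continuousOn_const.div continuousOn_id fun k hk =>
        ((abs_pos.mpr ha).trans_le hk).ne'
  exact (by fun_prop : Continuous fun k : ℝ => T * √(k ^ 2 - a ^ 2)).continuousOn.sub
    (continuous_arccos.comp_continuousOn hquot)

lemma mul_sqrt_sq_sub_sq_pos (hk : |a| < k) : 0 < k * √(k ^ 2 - a ^ 2) :=
  mul_pos ((abs_nonneg a).trans_lt hk) (sqrt_pos.mpr (by nlinarith [sq_abs a, abs_nonneg a]))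

lemma strictAntiOn_phaseDefect (hT : 0 < T) :
    StrictAntiOn (phaseDefect T a) (Icc |a| √(a / T)) := by
  refine strictAntiOn_of_deriv_neg (convex_Icc _ _)
    ((continuousOn_phaseDefect T a).mono Icc_subset_Ici_self) fun x hx => ?_
  rw [interior_Icc] at hx
  rw [(hasDerivAt_phaseDefect T hx.1).deriv]
  refine div_neg_of_neg_of_pos ?_ (mul_sqrt_sq_sub_sq_pos hx.1)
  have hx2 : x ^ 2 < a / T := (lt_sqrt ((abs_nonneg a).trans hx.1.le)).mp hx.2
  rw [lt_div_iff₀ hT] at hx2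
  linarith

lemma strictMonoOn_phaseDefect (hT : 0 < T) :
    StrictMonoOn (phaseDefect T a) (Ici (max |a| √(a / T))) := by
  refine strictMonoOn_of_deriv_pos (convex_Ici _)
    ((continuousOn_phaseDefect T a).mono (Ici_subset_Ici.mpr (le_max_left _ _))) fun x hx => ?_
  rw [interior_Ici, mem_Ioi, max_lt_iff] at hx
  rw [(hasDerivAt_phaseDefect T hx.1).deriv]
  refine div_pos ?_ (mul_sqrt_sq_sub_sq_pos hx.1)
  have hx2 : a / T < x ^ 2 := (sqrt_lt' ((abs_nonneg a).trans_lt hx.1)).mp hx.2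
  rw [div_lt_iff₀ hT] at hx2
  linarith

lemma phaseDefect_abs (T a : ℝ) : phaseDefect T a |a| = -arccos (a / |a|) := by
  simp [phaseDefect, sq_abs]

lemma phaseDefect_abs_nonpos (T a : ℝ) : phaseDefect T a |a| ≤ 0 := by
  rw [phaseDefect_abs, neg_nonpos]
  exact arccos_nonneg _

lemma phaseDefect_abs_neg (ha : a ≤ 0) : phaseDefect T a |a| < 0 := by
  rw [phaseDefect_abs, neg_neg_iff_pos, arccos_pos]
  exact (div_nonpos_of_nonpos_of_nonneg ha (abs_nonneg a)).trans_lt one_pos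

lemma phaseDefect_pos (hT : 0 < T) (hk : |a| + π / T < k) : 0 < phaseDefect T a k := by
  have hka : 0 ≤ k - |a| := by linarith [div_pos pi_pos hT]
  have hsqrt : k - |a| ≤ √(k ^ 2 - a ^ 2) :=
    (le_sqrt hka (by nlinarith [sq_abs a, abs_nonneg a])).mpr (by nlinarith [sq_abs a, abs_nonneg a])
  have hpi : π < T * √(k ^ 2 - a ^ 2) := by
    calc π = T * (π / T) := by field_simp
      _ < T * √(k ^ 2 - a ^ 2) := by gcongr; linarith
  rw [phaseDefect]
  linarith [arccos_le_pi (a / k)]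

lemma phaseDefect_max_neg (hT : 0 < T) (haT : a * T < 1) :
    phaseDefect T a (max |a| √(a / T)) < 0 := by
  rcases le_or_gt a 0 with ha | ha
  · have hsqrt : √(a / T) = 0 := sqrt_eq_zero_of_nonpos (div_nonpos_of_nonpos_of_nonneg ha hT.le)
    rw [hsqrt, max_eq_left (abs_nonneg a)]
    exact phaseDefect_abs_neg ha
  · have hlt : |a| < √(a / T) := by
      rw [lt_sqrt (abs_nonneg a), sq_abs, lt_div_iff₀ hT]
      nlinarith
    rw [max_eq_right hlt.le]
    calc phaseDefect T a √(a / T) < phaseDefect T a |a| :=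
          strictAntiOn_phaseDefect hT ⟨le_rfl, hlt.le⟩ ⟨hlt.le, le_rfl⟩ hlt
      _ ≤ 0 := phaseDefect_abs_nonpos T a

lemma max_lt_of_phaseDefect_eq_zero (hT : 0 < T) (hk : |a| < k) (h : phaseDefect T a k = 0) :
    max |a| √(a / T) < k := by
  refine max_lt hk (not_le.mp fun hle => h.not_lt ?_)
  calc phaseDefect T a k < phaseDefect T a |a| :=
        strictAntiOn_phaseDefect hT ⟨le_rfl, hk.le.trans hle⟩ ⟨hk.le, hle⟩ hk
    _ ≤ 0 := phaseDefect_abs_nonpos T a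

end DelayFeedback

open DelayFeedback in
theorem stmt0 (T : ℝ) (hT : 0 < T) :
    ∀ a : ℝ, a * T < 1 →
      ∃! k : ℝ, |a| < k ∧ T * Real.sqrt (k ^ 2 - a ^ 2) = Real.arccos (a / k) := by
  intro a haT
  simp only [← phaseDefect_eq_zero_iff]
  set c := max |a| √(a / T)
  have hcK : c ≤ c + π / T + 1 := by linarith [div_pos pi_pos hT]
  obtain ⟨k, hk, hk0⟩ := intermediate_value_Ioo hcK
    ((continuousOn_phaseDefect T a).mono (Icc_subset_Ici_iff hcK |>.mpr (le_max_left _ _)))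
    ⟨phaseDefect_max_neg hT haT, phaseDefect_pos hT (by linarith [le_max_left |a| √(a / T)])⟩
  refine ⟨k, ⟨(le_max_left _ _).trans_lt hk.1, hk0⟩, fun k' ⟨hk', hk'0⟩ => ?_⟩
  exact strictMonoOn_phaseDefect hT |>.injOn
    (max_lt_of_phaseDefect_eq_zero hT hk' hk'0).le hk.1.le (hk'0.trans hk0.symm)
end

section
/- Fix T > 0 and for each real a with a·T < 1 let k^u(a) denote the unique k > |a| satisfying T·√(k² − a²) = arccos(a/k). Then the function a ↦ k^u(a) is strictly decreasing and convex on the interval (−∞, 1/T). -/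
/-!
With `θ = arccos (a / k)` the defining equation reads `T k sin θ = θ`, so `(T a, T k)` is the
point `(θ cos θ / sin θ, θ / sin θ)` of a curve parametrised by `θ ∈ (0, π)`. Along it the first
coordinate strictly decreases while the second strictly increases, so `k` strictly decreases in
`a`. The slope `dk/da = -(sin θ - θ cos θ) / (θ - sin θ cos θ)` is antitone in `θ`, so each
tangent line of the curve lies below it; these tangent lines are supporting lines of `k`,
which is therefore convex.
-/

open Real Set

theorem convexOn_of_forall_add_apply_sub_le {E : Type*} [AddCommGroup E] [Module ℝ E]
    {s : Set E} (hs : Convex ℝ s) {f : E → ℝ} (g : E → E →ₗ[ℝ] ℝ)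
    (h : ∀ x ∈ s, ∀ y ∈ s, f x + g x (y - x) ≤ f y) : ConvexOn ℝ s f := by
  refine ⟨hs, fun x hx y hy a b ha hb hab => ?_⟩
  set z := a • x + b • y
  have hx' := h z (hs hx hy ha hb hab) x hx
  have hy' := h z (hs hx hy ha hb hab) y hy
  have hcancel : a * g z (x - z) + b * g z (y - z) = 0 := by
    have : a • (x - z) + b • (y - z) = (1 - (a + b)) • z := by
      simp only [z]
      module
    rw [hab, sub_self, zero_smul] at this
    simpa only [map_add, map_smul, smul_eq_mul, map_zero] using congrArg (g z) this
  simp only [smul_eq_mul]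
  linear_combination a * hx' + b * hy' - hcancel - f z * hab

lemma le_of_hasDerivAt_of_sign_change {s : Set ℝ} (hs : s.OrdConnected) {g g' : ℝ → ℝ}
    (hg : ∀ x ∈ s, HasDerivAt g (g' x) x) {θ φ : ℝ} (hθ : θ ∈ s) (hφ : φ ∈ s)
    (hright : ∀ x ∈ s, θ < x → 0 ≤ g' x) (hleft : ∀ x ∈ s, x < θ → g' x ≤ 0) :
    g θ ≤ g φ := by
  have hcont : ContinuousOn g s := fun x hx => (hg x hx).continuousAt.continuousWithinAt
  rcases le_total θ φ with hθφ | hφθ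
  · have hsub := hs.out hθ hφ
    refine monotoneOn_of_hasDerivWithinAt_nonneg (convex_Icc θ φ) (hcont.mono hsub)
      (fun x hx => (hg x (hsub (interior_subset hx))).hasDerivWithinAt) (fun x hx => ?_)
      (left_mem_Icc.2 hθφ) (right_mem_Icc.2 hθφ) hθφ
    rw [interior_Icc] at hx
    exact hright x (hsub (Ioo_subset_Icc_self hx)) hx.1
  · have hsub := hs.out hφ hθ
    refine antitoneOn_of_hasDerivWithinAt_nonpos (convex_Icc φ θ) (hcont.mono hsub)
      (fun x hx => (hg x (hsub (interior_subset hx))).hasDerivWithinAt) (fun x hx => ?_)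
      (left_mem_Icc.2 hφθ) (right_mem_Icc.2 hφθ) hφθ
    rw [interior_Icc] at hx
    exact hleft x (hsub (Ioo_subset_Icc_self hx)) hx.2

lemma nonneg_of_hasDerivAt_nonneg {f f' : ℝ → ℝ} {b : ℝ} (hf : ∀ x, HasDerivAt f (f' x) x)
    (h0 : f 0 = 0) (hf' : ∀ x ∈ Ioo 0 b, 0 ≤ f' x) {x : ℝ} (hx : x ∈ Icc 0 b) : 0 ≤ f x := by
  have hmono : MonotoneOn f (Icc 0 b) :=
    monotoneOn_of_hasDerivWithinAt_nonneg (convex_Icc 0 b)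
      (fun y _ => (hf y).continuousAt.continuousWithinAt) (fun y _ => (hf y).hasDerivWithinAt)
      (by simpa only [interior_Icc] using hf')
  simpa [h0] using hmono (left_mem_Icc.2 (hx.1.trans hx.2)) hx hx.1

namespace Real

lemma mul_cos_lt_sin {x : ℝ} (hx : x ∈ Ioo 0 π) : x * cos x < sin x := by
  have hsin := sin_pos_of_pos_of_lt_pi hx.1 hx.2
  rcases lt_or_ge x (π / 2) with hx2 | hx2
  · have hcos : 0 < cos x := cos_pos_of_mem_Ioo ⟨by linarith [hx.1], hx2⟩
    have := lt_tan hx.1 hx2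
    rwa [tan_eq_sin_div_cos, lt_div_iff₀ hcos] at this
  · have : cos x ≤ 0 := cos_nonpos_of_pi_div_two_le_of_le hx2 (by linarith [hx.2])
    nlinarith [hx.1]

lemma sin_mul_cos_lt_self {x : ℝ} (hx : 0 < x) : sin x * cos x < x := by
  have := sin_lt (by linarith : 0 < 2 * x)
  rw [sin_two_mul] at this
  linarith

lemma three_mul_sin_mul_cos_le {x : ℝ} (hx : x ∈ Icc 0 π) :
    3 * (sin x * cos x) ≤ 2 * x + x * (cos x ^ 2 - sin x ^ 2) := by
  have hderiv (y : ℝ) : HasDerivAt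
      (fun y => 2 * y - 3 * (sin y * cos y) + y * (cos y ^ 2 - sin y ^ 2))
      (4 * sin y * (sin y - y * cos y)) y := by
    have := (((hasDerivAt_id y).const_mul 2).sub
      (((hasDerivAt_sin y).mul (hasDerivAt_cos y)).const_mul 3)).add
      ((hasDerivAt_id y).mul (((hasDerivAt_cos y).pow 2).sub ((hasDerivAt_sin y).pow 2)))
    refine this.congr_deriv ?_
    simp only [Pi.pow_apply, Pi.sub_apply, id, Nat.cast_ofNat]
    linear_combination -2 * sin_sq_add_cos_sq y
  have := nonneg_of_hasDerivAt_nonneg hderiv (by simp) (fun y hy => by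
    have := sin_pos_of_pos_of_lt_pi hy.1 hy.2
    have := sub_pos.2 (mul_cos_lt_sin hy)
    positivity) hx
  linarith

lemma two_mul_sin_sq_le {x : ℝ} (hx : x ∈ Icc 0 π) :
    2 * sin x ^ 2 ≤ x ^ 2 + x * sin x * cos x := by
  have hderiv (y : ℝ) : HasDerivAt (fun y => y ^ 2 + y * sin y * cos y - 2 * sin y ^ 2)
      (2 * y + y * (cos y ^ 2 - sin y ^ 2) - 3 * (sin y * cos y)) y := by
    have := (((hasDerivAt_id y).pow 2).add (((hasDerivAt_id y).mul (hasDerivAt_sin y)).mul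
      (hasDerivAt_cos y))).sub (((hasDerivAt_sin y).pow 2).const_mul 2)
    refine this.congr_deriv ?_
    simp only [Pi.mul_apply, id, Nat.cast_ofNat]
    ring
  have := nonneg_of_hasDerivAt_nonneg hderiv (by simp)
    (fun y hy => by linarith [three_mul_sin_mul_cos_le (Ioo_subset_Icc_self hy)]) hx
  linarith

end Real

noncomputable def kOfAngle (θ : ℝ) : ℝ := θ / sin θ

noncomputable def aOfAngle (θ : ℝ) : ℝ := θ * cos θ / sin θ

noncomputable def slopeOfAngle (θ : ℝ) : ℝ := -(sin θ - θ * cos θ) / (θ - sin θ * cos θ)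

lemma hasDerivAt_kOfAngle {θ : ℝ} (h : sin θ ≠ 0) :
    HasDerivAt kOfAngle ((sin θ - θ * cos θ) / sin θ ^ 2) θ := by
  refine ((hasDerivAt_id θ).div (hasDerivAt_sin θ) h).congr_deriv ?_
  simp only [id]
  ring

lemma hasDerivAt_aOfAngle {θ : ℝ} (h : sin θ ≠ 0) :
    HasDerivAt aOfAngle (-(θ - sin θ * cos θ) / sin θ ^ 2) θ := by
  refine (((hasDerivAt_id θ).mul (hasDerivAt_cos θ)).div (hasDerivAt_sin θ) h).congr_deriv ?_
  simp only [Pi.mul_apply, id]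
  field_simp
  linear_combination -θ * sin_sq_add_cos_sq θ

lemma hasDerivAt_slopeOfAngle {θ : ℝ} (h : θ - sin θ * cos θ ≠ 0) :
    HasDerivAt slopeOfAngle
      (-(sin θ * (θ ^ 2 + θ * sin θ * cos θ - 2 * sin θ ^ 2)) / (θ - sin θ * cos θ) ^ 2) θ := by
  have hS : HasDerivAt (fun x => sin x - x * cos x) (θ * sin θ) θ := by
    refine ((hasDerivAt_sin θ).sub ((hasDerivAt_id θ).mul (hasDerivAt_cos θ))).congr_deriv ?_
    simp only [id]
    ring
  have hE : HasDerivAt (fun x => x - sin x * cos x) (2 * sin θ ^ 2) θ := by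
    refine ((hasDerivAt_id θ).sub ((hasDerivAt_sin θ).mul (hasDerivAt_cos θ))).congr_deriv ?_
    linear_combination -sin_sq_add_cos_sq θ
  refine (hS.neg.div hE h).congr_deriv ?_
  simp only [Pi.neg_apply]
  field_simp
  ring

lemma strictMonoOn_kOfAngle : StrictMonoOn kOfAngle (Ioo 0 π) := by
  have hderiv (θ : ℝ) (hθ : θ ∈ Ioo 0 π) :=
    hasDerivAt_kOfAngle (sin_pos_of_pos_of_lt_pi hθ.1 hθ.2).ne'
  refine strictMonoOn_of_hasDerivWithinAt_pos (convex_Ioo 0 π)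
    (fun θ hθ => (hderiv θ hθ).continuousAt.continuousWithinAt)
    (fun θ hθ => (hderiv θ (interior_subset hθ)).hasDerivWithinAt) fun θ hθ => ?_
  rw [interior_Ioo] at hθ
  have := sin_pos_of_pos_of_lt_pi hθ.1 hθ.2
  have := sub_pos.2 (mul_cos_lt_sin hθ)
  positivity

lemma strictAntiOn_aOfAngle : StrictAntiOn aOfAngle (Ioo 0 π) := by
  have hderiv (θ : ℝ) (hθ : θ ∈ Ioo 0 π) :=
    hasDerivAt_aOfAngle (sin_pos_of_pos_of_lt_pi hθ.1 hθ.2).ne'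
  refine strictAntiOn_of_hasDerivWithinAt_neg (convex_Ioo 0 π)
    (fun θ hθ => (hderiv θ hθ).continuousAt.continuousWithinAt)
    (fun θ hθ => (hderiv θ (interior_subset hθ)).hasDerivWithinAt) fun θ hθ => ?_
  rw [interior_Ioo] at hθ
  have := sin_pos_of_pos_of_lt_pi hθ.1 hθ.2
  have := sub_pos.2 (sin_mul_cos_lt_self hθ.1)
  rw [neg_div, neg_lt_zero]
  positivity

lemma antitoneOn_slopeOfAngle : AntitoneOn slopeOfAngle (Ioo 0 π) := by
  have hderiv (θ : ℝ) (hθ : θ ∈ Ioo 0 π) :=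
    hasDerivAt_slopeOfAngle (sub_pos.2 (sin_mul_cos_lt_self hθ.1)).ne'
  refine antitoneOn_of_hasDerivWithinAt_nonpos (convex_Ioo 0 π)
    (fun θ hθ => (hderiv θ hθ).continuousAt.continuousWithinAt)
    (fun θ hθ => (hderiv θ (interior_subset hθ)).hasDerivWithinAt) fun θ hθ => ?_
  rw [interior_Ioo] at hθ
  have := sin_pos_of_pos_of_lt_pi hθ.1 hθ.2
  have := sub_nonneg.2 (two_mul_sin_sq_le (Ioo_subset_Icc_self hθ))
  rw [neg_div, neg_nonpos]
  positivity

lemma kOfAngle_add_slopeOfAngle_mul_le {θ φ : ℝ} (hθ : θ ∈ Ioo 0 π) (hφ : φ ∈ Ioo 0 π) :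
    kOfAngle θ + slopeOfAngle θ * (aOfAngle φ - aOfAngle θ) ≤ kOfAngle φ := by
  have hderiv : ∀ x ∈ Ioo 0 π, HasDerivAt (fun x => kOfAngle x - slopeOfAngle θ * aOfAngle x)
      ((slopeOfAngle θ - slopeOfAngle x) * (x - sin x * cos x) / sin x ^ 2) x := by
    intro x hx
    have hsin := (sin_pos_of_pos_of_lt_pi hx.1 hx.2).ne'
    have hE := (sub_pos.2 (sin_mul_cos_lt_self hx.1)).ne'
    refine ((hasDerivAt_kOfAngle hsin).sub
      ((hasDerivAt_aOfAngle hsin).const_mul (slopeOfAngle θ))).congr_deriv ?_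
    have hslope : slopeOfAngle x * (x - sin x * cos x) = -(sin x - x * cos x) :=
      div_mul_cancel₀ _ hE
    rw [sub_mul, hslope]
    ring
  have := le_of_hasDerivAt_of_sign_change ordConnected_Ioo hderiv hθ hφ
    (fun x hx hθx => ?_) (fun x hx hxθ => ?_)
  · linarith
  · have := sub_nonneg.2 (antitoneOn_slopeOfAngle hθ hx hθx.le)
    have := sub_pos.2 (sin_mul_cos_lt_self hx.1)
    positivity
  · have := sub_nonpos.2 (antitoneOn_slopeOfAngle hx hθ hxθ.le)
    have := sub_pos.2 (sin_mul_cos_lt_self hx.1)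
    exact div_nonpos_of_nonpos_of_nonneg (by nlinarith) (sq_nonneg _)

lemma arccos_div_mem_Ioo_and_ofAngle_eq {T a k : ℝ} (hk : |a| < k)
    (h : T * √(k ^ 2 - a ^ 2) = arccos (a / k)) :
    arccos (a / k) ∈ Ioo 0 π ∧ kOfAngle (arccos (a / k)) = T * k ∧
      aOfAngle (arccos (a / k)) = T * a := by
  have hk0 : 0 < k := (abs_nonneg a).trans_lt hk
  have habs : |a / k| < 1 := by
    rw [abs_div, abs_of_pos hk0]
    exact (div_lt_one hk0).2 hk
  obtain ⟨hlo, hhi⟩ := abs_lt.1 habs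
  have hθ : arccos (a / k) ∈ Ioo 0 π := ⟨arccos_pos.2 hhi, arccos_lt_pi.2 hlo⟩
  have hsin := sin_pos_of_pos_of_lt_pi hθ.1 hθ.2
  have hsqrt : √(k ^ 2 - a ^ 2) = k * sin (arccos (a / k)) := by
    have : k ^ 2 - a ^ 2 = k ^ 2 * (1 - (a / k) ^ 2) := by field_simp
    rw [this, sqrt_mul (sq_nonneg k), sqrt_sq hk0.le, sin_arccos]
  rw [hsqrt] at h
  refine ⟨hθ, ?_, ?_⟩
  · rw [kOfAngle, div_eq_iff hsin.ne']
    linear_combination -h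
  · rw [aOfAngle, cos_arccos hlo.le hhi.le, div_eq_iff hsin.ne']
    field_simp
    linear_combination -a * h

theorem stmt1 (T : ℝ) (hT : 0 < T) (ku : ℝ → ℝ)
    (hku : ∀ a : ℝ, a * T < 1 →
      |a| < ku a ∧ T * Real.sqrt ((ku a) ^ 2 - a ^ 2) = Real.arccos (a / ku a)) :
    StrictAntiOn ku (Set.Iio (1 / T)) ∧ ConvexOn ℝ (Set.Iio (1 / T)) ku := by
  set θ : ℝ → ℝ := fun a => arccos (a / ku a)
  have hθ (a : ℝ) (ha : a ∈ Iio (1 / T)) :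
      θ a ∈ Ioo 0 π ∧ kOfAngle (θ a) = T * ku a ∧ aOfAngle (θ a) = T * a :=
    have hku := hku a ((lt_div_iff₀ hT).1 ha)
    arccos_div_mem_Ioo_and_ofAngle_eq hku.1 hku.2
  constructor
  · intro a ha b hb hlt
    obtain ⟨hθa, hka, haa⟩ := hθ a ha
    obtain ⟨hθb, hkb, hab⟩ := hθ b hb
    have hθba : θ b < θ a := (strictAntiOn_aOfAngle.lt_iff_gt hθa hθb).1 <| by
      rw [haa, hab]
      gcongr
    have := strictMonoOn_kOfAngle hθb hθa hθba
    rw [hka, hkb] at this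
    exact lt_of_mul_lt_mul_left this hT.le
  · refine convexOn_of_forall_add_apply_sub_le (convex_Iio _)
      (fun a => LinearMap.mulLeft ℝ (slopeOfAngle (θ a))) fun a ha b hb => ?_
    obtain ⟨hθa, hka, haa⟩ := hθ a ha
    obtain ⟨hθb, hkb, hab⟩ := hθ b hb
    have := kOfAngle_add_slopeOfAngle_mul_le hθa hθb
    rw [hka, hkb, haa, hab] at this
    rw [LinearMap.mulLeft_apply]
    exact le_of_mul_le_mul_left (by linarith) hT
end

section
/- Fix a real number a and for each T > 0 with a·T < 1 let k^u(T) denote the unique k > |a| satisfying T·√(k² − a²) = arccos(a/k). Then the function T ↦ k^u(T) is strictly decreasing and convex on its domain (i.e., on (0, 1/a) if a > 0, and on (0, ∞) if a ≤ 0). -/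
/-! Solving `T * √(k² - a²) = arccos (a / k)` for `T` exhibits `ku` as a right inverse of
`g k = arccos (a / k) / √(k² - a²)` on `(|a|, ∞)`. The inverse of a strictly decreasing convex
function is strictly decreasing and convex, so it suffices to show `g' < 0 ≤ g''`. Writing
`a = k cos θ` and `√(k² - a²) = k sin θ` with `θ = arccos (a / k) ∈ (0, π)`, the sign of `g'`
is that of `cos θ sin θ - θ` and the sign of `g''` that of
`θ (3 - sin² θ) - cos θ sin θ (3 + sin² θ)`; both are elementary trigonometric inequalities. -/

open Real Set

section InverseFunction

variable {s t : Set ℝ} {f g : ℝ → ℝ}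

theorem StrictAntiOn.of_leftInvOn (hg : StrictAntiOn g t) (hf : MapsTo f s t)
    (hgf : LeftInvOn g f s) : StrictAntiOn f s := fun x hx y hy hxy => by
  rwa [← hg.lt_iff_gt (hf hx) (hf hy), hgf hx, hgf hy]

theorem ConvexOn.of_leftInvOn (hs : Convex ℝ s) (hgc : ConvexOn ℝ t g)
    (hga : StrictAntiOn g t) (hf : MapsTo f s t) (hgf : LeftInvOn g f s) : ConvexOn ℝ s f := by
  refine ⟨hs, fun x hx y hy α β hα hβ hαβ => ?_⟩
  have hmem : α • f x + β • f y ∈ t := hgc.1 (hf hx) (hf hy) hα hβ hαβ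
  rw [← hga.le_iff_ge hmem (hf (hs hx hy hα hβ hαβ)), hgf (hs hx hy hα hβ hαβ)]
  simpa only [hgf hx, hgf hy] using hgc.2 (hf hx) (hf hy) hα hβ hαβ

end InverseFunction

section Trigonometric

variable {t : ℝ}

theorem cos_mul_sin_lt_self (ht : 0 < t) : cos t * sin t < t := by
  have := sin_lt (mul_pos two_pos ht)
  rw [sin_two_mul] at this
  linarith

theorem mul_cos_le_sin (h0 : 0 ≤ t) (hπ : t ≤ π) : t * cos t ≤ sin t := by
  rcases le_or_gt (cos t) 0 with hc | hc
  · nlinarith [sin_nonneg_of_nonneg_of_le_pi h0 hπ]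
  · have hlt : t < π / 2 := by
      by_contra! hge
      exact hc.not_ge (cos_nonpos_of_pi_div_two_le_of_le hge (by linarith [pi_pos]))
    have := le_tan h0 hlt
    rwa [tan_eq_sin_div_cos, le_div_iff₀ hc] at this

theorem cos_mul_sin_mul_three_add_sin_sq_le (h0 : 0 ≤ t) (hπ : t ≤ π) :
    cos t * sin t * (3 + sin t ^ 2) ≤ t * (3 - sin t ^ 2) := by
  let h : ℝ → ℝ := fun x => x * (3 - sin x ^ 2) - cos x * sin x * (3 + sin x ^ 2)
  have hderiv (x : ℝ) :
      HasDerivAt h (2 * sin x * (2 * sin x ^ 3 + (sin x - x * cos x))) x := by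
    have := ((hasDerivAt_id x).mul (((hasDerivAt_sin x).pow 2).const_sub 3)).sub
      (((hasDerivAt_cos x).mul (hasDerivAt_sin x)).mul (((hasDerivAt_sin x).pow 2).const_add 3))
    refine this.congr_deriv ?_
    simp only [id, Pi.pow_apply, Pi.mul_apply]
    linear_combination (-3 * sin x ^ 2 - 3) * sin_sq_add_cos_sq x
  have hmono : MonotoneOn h (Icc 0 π) := by
    refine monotoneOn_of_hasDerivWithinAt_nonneg (convex_Icc 0 π)
      (fun x _ => (hderiv x).continuousAt.continuousWithinAt)
      (fun x _ => (hderiv x).hasDerivWithinAt) fun x hx => ?_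
    rw [interior_Icc] at hx
    have hsin := sin_nonneg_of_nonneg_of_le_pi hx.1.le hx.2.le
    have := mul_cos_le_sin hx.1.le hx.2.le
    positivity
  simpa [h] using hmono ⟨le_rfl, pi_pos.le⟩ ⟨h0, hπ⟩ h0

end Trigonometric

noncomputable def arccosDivSqrt (a k : ℝ) : ℝ := arccos (a / k) / √(k ^ 2 - a ^ 2)

noncomputable def arccosDivSqrtDeriv (a k : ℝ) : ℝ :=
  (a * √(k ^ 2 - a ^ 2) - k ^ 2 * arccos (a / k)) / (k * √(k ^ 2 - a ^ 2) ^ 3)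

-- `3 k² - √(k² - a²)²` rather than `2 k² + a²` makes `hasDerivAt_arccosDivSqrtDeriv` a field
-- identity.
noncomputable def arccosDivSqrtDeriv2 (a k : ℝ) : ℝ :=
  (k ^ 2 * arccos (a / k) * (3 * k ^ 2 - √(k ^ 2 - a ^ 2) ^ 2)
    - a * √(k ^ 2 - a ^ 2) * (3 * k ^ 2 + √(k ^ 2 - a ^ 2) ^ 2)) / (k ^ 2 * √(k ^ 2 - a ^ 2) ^ 5)

section ArccosDivSqrt

variable {a k : ℝ}

theorem pos_of_abs_lt (ha : |a| < k) : 0 < k := (abs_nonneg a).trans_lt ha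

theorem sqrt_sq_sub_sq_pos (ha : |a| < k) : 0 < √(k ^ 2 - a ^ 2) :=
  sqrt_pos.2 <| sub_pos.2 <| sq_lt_sq' (abs_lt.1 ha).1 (abs_lt.1 ha).2

theorem abs_div_lt_one_of_abs_lt (ha : |a| < k) : |a / k| < 1 := by
  rwa [abs_div, abs_of_pos (pos_of_abs_lt ha), div_lt_one (pos_of_abs_lt ha)]

theorem cos_arccos_div (ha : |a| < k) : cos (arccos (a / k)) = a / k :=
  cos_arccos (abs_lt.1 (abs_div_lt_one_of_abs_lt ha)).1.le
    (abs_lt.1 (abs_div_lt_one_of_abs_lt ha)).2.le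

theorem sin_arccos_div (ha : |a| < k) : sin (arccos (a / k)) = √(k ^ 2 - a ^ 2) / k := by
  have hk := pos_of_abs_lt ha
  rw [sin_arccos, show 1 - (a / k) ^ 2 = (k ^ 2 - a ^ 2) / k ^ 2 by field_simp,
    sqrt_div' _ (sq_nonneg k), sqrt_sq hk.le]

theorem hasDerivAt_arccos_div (ha : |a| < k) :
    HasDerivAt (fun x => arccos (a / x)) (a / (k * √(k ^ 2 - a ^ 2))) k := by
  have hk := pos_of_abs_lt ha
  have hr := abs_lt.1 (abs_div_lt_one_of_abs_lt ha)
  have hdiv : HasDerivAt (fun x => a / x) (-(a / k ^ 2)) k := by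
    simpa only [div_eq_mul_inv, pow_two, mul_inv, neg_mul, mul_neg, mul_assoc]
      using (hasDerivAt_inv hk.ne').const_mul a
  refine ((hasDerivAt_arccos hr.1.ne' hr.2.ne).comp k hdiv).congr_deriv ?_
  rw [← sin_arccos, sin_arccos_div ha]
  field_simp

theorem hasDerivAt_sqrt_sq_sub_sq (ha : |a| < k) :
    HasDerivAt (fun x => √(x ^ 2 - a ^ 2)) (k / √(k ^ 2 - a ^ 2)) k := by
  have hs := sqrt_sq_sub_sq_pos ha
  refine (((hasDerivAt_pow 2 k).sub_const (a ^ 2)).sqrt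
    (sqrt_pos.1 hs).ne').congr_deriv ?_
  field_simp
  ring

theorem hasDerivAt_arccosDivSqrt (ha : |a| < k) :
    HasDerivAt (arccosDivSqrt a) (arccosDivSqrtDeriv a k) k := by
  have hs := sqrt_sq_sub_sq_pos ha
  refine ((hasDerivAt_arccos_div ha).div (hasDerivAt_sqrt_sq_sub_sq ha) hs.ne').congr_deriv ?_
  rw [arccosDivSqrtDeriv]
  field_simp

theorem hasDerivAt_arccosDivSqrtDeriv (ha : |a| < k) :
    HasDerivAt (arccosDivSqrtDeriv a) (arccosDivSqrtDeriv2 a k) k := by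
  have hk := pos_of_abs_lt ha
  have hs := sqrt_sq_sub_sq_pos ha
  have hS := hasDerivAt_sqrt_sq_sub_sq ha
  have hnum := ((hS.const_mul a).sub ((hasDerivAt_pow 2 k).mul (hasDerivAt_arccos_div ha)))
  have hden := (hasDerivAt_id k).mul (hS.pow 3)
  refine (hnum.div hden (by simp only [Pi.mul_apply, Pi.pow_apply, id]; positivity)).congr_deriv ?_
  simp only [id, Pi.pow_apply, Pi.mul_apply, Pi.sub_apply, arccosDivSqrtDeriv2]
  field_simp
  ring

theorem arccosDivSqrtDeriv_neg (ha : |a| < k) : arccosDivSqrtDeriv a k < 0 := by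
  have hk := pos_of_abs_lt ha
  have hs := sqrt_sq_sub_sq_pos ha
  have key := cos_mul_sin_lt_self (arccos_pos.2 (abs_lt.1 (abs_div_lt_one_of_abs_lt ha)).2)
  rw [cos_arccos_div ha, sin_arccos_div ha] at key
  refine div_neg_of_neg_of_pos ?_ (by positivity)
  have hscale : a * √(k ^ 2 - a ^ 2) = k ^ 2 * (a / k * (√(k ^ 2 - a ^ 2) / k)) := by
    field_simp
  rw [hscale, sub_neg]
  exact mul_lt_mul_of_pos_left key (by positivity)

theorem arccosDivSqrtDeriv2_nonneg (ha : |a| < k) : 0 ≤ arccosDivSqrtDeriv2 a k := by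
  have hk := pos_of_abs_lt ha
  have key := cos_mul_sin_mul_three_add_sin_sq_le (arccos_nonneg (a / k)) (arccos_le_pi _)
  rw [cos_arccos_div ha, sin_arccos_div ha] at key
  refine div_nonneg ?_ (by positivity)
  set θ := arccos (a / k)
  set r := √(k ^ 2 - a ^ 2)
  have hscale : k ^ 2 * θ * (3 * k ^ 2 - r ^ 2) - a * r * (3 * k ^ 2 + r ^ 2) =
      k ^ 4 * (θ * (3 - (r / k) ^ 2) - a / k * (r / k) * (3 + (r / k) ^ 2)) := by
    field_simp
  rw [hscale]
  exact mul_nonneg (by positivity) (sub_nonneg.2 key)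

theorem strictAntiOn_arccosDivSqrt (a : ℝ) : StrictAntiOn (arccosDivSqrt a) (Ioi |a|) :=
  strictAntiOn_of_hasDerivWithinAt_neg (convex_Ioi _)
    (fun _ hk => (hasDerivAt_arccosDivSqrt hk).continuousAt.continuousWithinAt)
    (fun _ hk => (hasDerivAt_arccosDivSqrt (interior_Ioi.subset hk)).hasDerivWithinAt)
    fun _ hk => arccosDivSqrtDeriv_neg (interior_Ioi.subset hk)

theorem convexOn_arccosDivSqrt (a : ℝ) : ConvexOn ℝ (Ioi |a|) (arccosDivSqrt a) :=
  convexOn_of_hasDerivWithinAt2_nonneg (convex_Ioi _)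
    (fun _ hk => (hasDerivAt_arccosDivSqrt hk).continuousAt.continuousWithinAt)
    (fun _ hk => (hasDerivAt_arccosDivSqrt (interior_Ioi.subset hk)).hasDerivWithinAt)
    (fun _ hk => (hasDerivAt_arccosDivSqrtDeriv (interior_Ioi.subset hk)).hasDerivWithinAt)
    fun _ hk => arccosDivSqrtDeriv2_nonneg (interior_Ioi.subset hk)

theorem arccosDivSqrt_eq_of_mul_sqrt_eq {T : ℝ} (ha : |a| < k)
    (hT : T * √(k ^ 2 - a ^ 2) = arccos (a / k)) : arccosDivSqrt a k = T := by
  rw [arccosDivSqrt, ← hT, mul_div_cancel_right₀ _ (sqrt_sq_sub_sq_pos ha).ne']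

end ArccosDivSqrt

theorem stmt3 (a : ℝ) (ku : ℝ → ℝ)
    (hku : ∀ T : ℝ, 0 < T → a * T < 1 →
      |a| < ku T ∧ T * Real.sqrt ((ku T) ^ 2 - a ^ 2) = Real.arccos (a / ku T)) :
    StrictAntiOn ku {T : ℝ | 0 < T ∧ a * T < 1} ∧
    ConvexOn ℝ {T : ℝ | 0 < T ∧ a * T < 1} ku := by
  have hconvex : Convex ℝ {T : ℝ | 0 < T ∧ a * T < 1} :=
    (convex_Ioi 0).inter (convex_halfSpace_lt ⟨mul_add a, fun c x => mul_left_comm a c x⟩ 1)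
  have hmaps : MapsTo ku {T : ℝ | 0 < T ∧ a * T < 1} (Ioi |a|) :=
    fun T hT => (hku T hT.1 hT.2).1
  have hinv : LeftInvOn (arccosDivSqrt a) ku {T : ℝ | 0 < T ∧ a * T < 1} :=
    fun T hT => arccosDivSqrt_eq_of_mul_sqrt_eq (hku T hT.1 hT.2).1 (hku T hT.1 hT.2).2
  exact ⟨(strictAntiOn_arccosDivSqrt a).of_leftInvOn hmaps hinv,
    (convexOn_arccosDivSqrt a).of_leftInvOn hconvex (strictAntiOn_arccosDivSqrt a) hmaps hinv⟩
end

section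
/- Fix a real number a and for each T > 0 with a·T < 1 let k^u(T) denote the unique k > |a| satisfying T·√(k² − a²) = arccos(a/k). Then: (i) if a > 0, lim_{T→(1/a)⁻} k^u(T) = a and lim_{T→0⁺} k^u(T) = +∞; (ii) if a < 0, lim_{T→+∞} k^u(T) = |a| and lim_{T→0⁺} k^u(T) = +∞. -/
/-!
Write `θ = arccos (a / k)`, so that `a = k cos θ` and the equation reads `T k sin θ = θ`.
Since `sin θ ≤ θ ≤ π` this gives `1 ≤ T k` and `T² (k² - a²) ≤ π²`, which yield the limits at
`T → 0⁺` and `T → ∞`. Eliminating `k` gives `a T sin θ = θ cos θ`, and the Taylor bounds for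
`sin` and `cos` turn this into `θ² ≤ 30 (1 - a T)`; hence `a / k = cos θ ≥ 1 - 15 (1 - a T)`,
which squeezes `k` to `a` as `T → 1 / a`.
-/

open Real Filter Set Topology

lemma Real.mul_cos_le_one_sub_sq_div_mul_sin {θ : ℝ} (h₀ : 0 ≤ θ) (hπ : θ ≤ π) :
    θ * cos θ ≤ (1 - θ ^ 2 / 30) * sin θ := by
  have hπ₂ : π ^ 2 ≤ 10 := by nlinarith [pi_pos, pi_lt_d2]
  have hθ₂ : θ ^ 2 ≤ 10 := by nlinarith
  have hcos : cos θ ≤ 1 - 2 / π ^ 2 * θ ^ 2 :=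
    cos_le_one_sub_mul_cos_sq (by rwa [abs_of_nonneg h₀])
  have hπ_inv : 1 / 5 ≤ 2 / π ^ 2 := by
    rw [div_le_div_iff₀ (by norm_num) (by positivity)]; linarith
  -- `1 / 30 = 1 / 5 - 1 / 6`, with `1 / 5 ≤ 2 / π²` from `cos` and `1 / 6` from `sin`.
  calc θ * cos θ ≤ θ * (1 - 2 / π ^ 2 * θ ^ 2) := mul_le_mul_of_nonneg_left hcos h₀
    _ ≤ (1 - θ ^ 2 / 30) * (θ - θ ^ 3 / 6) := by nlinarith [pow_nonneg h₀ 3, pow_nonneg h₀ 5]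
    _ ≤ (1 - θ ^ 2 / 30) * sin θ :=
      mul_le_mul_of_nonneg_left (sin_ge_sub_cube h₀) (by linarith)

lemma Real.sqrt_sq_sub_sq_eq_mul_sin_arccos (a : ℝ) {k : ℝ} (hk : 0 ≤ k) :
    √(k ^ 2 - a ^ 2) = k * sin (arccos (a / k)) := by
  rcases hk.eq_or_lt with rfl | hk
  · simp [sqrt_eq_zero', sq_nonneg]
  rw [sin_arccos, ← sqrt_sq hk.le, ← sqrt_mul (sq_nonneg k), sqrt_sq hk.le]
  congr 1
  field_simp

def IsArccosRoot (a T k : ℝ) : Prop :=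
  |a| < k ∧ T * √(k ^ 2 - a ^ 2) = arccos (a / k)

namespace IsArccosRoot

variable {a T k : ℝ} (h : IsArccosRoot a T k)
include h

lemma pos : 0 < k := (abs_nonneg a).trans_lt h.1

lemma abs_div_lt_one : |a / k| < 1 := by
  rw [abs_div, abs_of_pos h.pos, div_lt_one h.pos]
  exact h.1

lemma sin_arccos_pos : 0 < sin (arccos (a / k)) := by
  obtain ⟨hlo, hhi⟩ := abs_lt.1 h.abs_div_lt_one
  exact sin_pos_of_pos_of_lt_pi (arccos_pos.2 hhi) (arccos_lt_pi.2 hlo)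

lemma mul_cos_arccos : k * cos (arccos (a / k)) = a := by
  obtain ⟨hlo, hhi⟩ := abs_lt.1 h.abs_div_lt_one
  rw [cos_arccos hlo.le hhi.le]
  field_simp [h.pos.ne']

lemma mul_mul_sin_arccos : T * k * sin (arccos (a / k)) = arccos (a / k) := by
  rw [mul_assoc, ← sqrt_sq_sub_sq_eq_mul_sin_arccos a h.pos.le, h.2]

lemma one_le_mul : 1 ≤ T * k := by
  have hsin := h.sin_arccos_pos
  have hle : sin (arccos (a / k)) ≤ T * k * sin (arccos (a / k)) := by
    rw [h.mul_mul_sin_arccos]; exact sin_le (arccos_nonneg _)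
  exact (le_mul_iff_one_le_left hsin).1 hle

lemma pos_left : 0 < T :=
  pos_of_mul_pos_left (one_pos.trans_le h.one_le_mul) h.pos.le

lemma le_sqrt : k ≤ √(a ^ 2 + (π / T) ^ 2) := by
  have hT := h.pos_left
  have hsq : (T * √(k ^ 2 - a ^ 2)) ^ 2 ≤ π ^ 2 := by
    rw [h.2]
    exact pow_le_pow_left₀ (arccos_nonneg _) (arccos_le_pi _) 2
  have hnn : 0 ≤ k ^ 2 - a ^ 2 := by nlinarith [abs_nonneg a, sq_abs a, h.1]
  rw [mul_pow, sq_sqrt hnn] at hsq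
  apply le_sqrt_of_sq_le
  rw [div_pow, ← sub_le_iff_le_add', le_div_iff₀ (by positivity)]
  linarith

lemma mul_one_sub_le : k * (1 - 15 * (1 - a * T)) ≤ a := by
  have hsin := h.sin_arccos_pos
  have hk := h.mul_cos_arccos
  have hT := h.mul_mul_sin_arccos
  set θ := arccos (a / k)
  have elim_k : a * T * sin θ = θ * cos θ := by
    linear_combination (-(T * sin θ)) * hk + cos θ * hT
  have hθ : θ ^ 2 ≤ 30 * (1 - a * T) := by
    have key := mul_cos_le_one_sub_sq_div_mul_sin (arccos_nonneg (a / k)) (arccos_le_pi _)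
    rw [← elim_k] at key
    linarith [le_of_mul_le_mul_right key hsin]
  calc k * (1 - 15 * (1 - a * T)) ≤ k * (1 - θ ^ 2 / 2) :=
        mul_le_mul_of_nonneg_left (by linarith) h.pos.le
    _ ≤ k * cos θ := mul_le_mul_of_nonneg_left one_sub_sq_div_two_le_cos h.pos.le
    _ = a := hk

end IsArccosRoot

variable {a : ℝ} {ku : ℝ → ℝ}

lemma tendsto_atTop_of_isArccosRoot {l : Filter ℝ} (hl : Tendsto (·⁻¹) l atTop)
    (h : ∀ᶠ T in l, IsArccosRoot a T (ku T)) : Tendsto ku l atTop := by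
  refine tendsto_atTop_mono' _ ?_ hl
  filter_upwards [h] with T hT
  rw [← one_div, div_le_iff₀ hT.pos_left, mul_comm]
  exact hT.one_le_mul

lemma tendsto_abs_of_isArccosRoot (h : ∀ᶠ T in atTop, IsArccosRoot a T (ku T)) :
    Tendsto ku atTop (𝓝 |a|) := by
  have hbound : Tendsto (fun T => √(a ^ 2 + (π / T) ^ 2)) atTop (𝓝 |a|) := by
    have : Tendsto (fun T => a ^ 2 + (π / T) ^ 2) atTop (𝓝 (a ^ 2 + 0 ^ 2)) :=
      tendsto_const_nhds.add ((tendsto_const_nhds.div_atTop tendsto_id).pow 2)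
    simpa [sqrt_sq_eq_abs] using this.sqrt
  refine tendsto_of_tendsto_of_tendsto_of_le_of_le' tendsto_const_nhds hbound ?_ ?_
  · filter_upwards [h] with T hT using hT.1.le
  · filter_upwards [h] with T hT using hT.le_sqrt

lemma tendsto_self_of_isArccosRoot (ha : 0 < a)
    (h : ∀ᶠ T in 𝓝[<] (1 / a), IsArccosRoot a T (ku T)) :
    Tendsto ku (𝓝[<] (1 / a)) (𝓝 a) := by
  have hden : Tendsto (fun T => 1 - 15 * (1 - a * T)) (𝓝 (1 / a)) (𝓝 1) :=
    (by fun_prop : Continuous fun T => 1 - 15 * (1 - a * T)).tendsto' _ _ (by field_simp; ring)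
  have hbound : Tendsto (fun T => a / (1 - 15 * (1 - a * T))) (𝓝[<] (1 / a)) (𝓝 a) := by
    simpa [Pi.div_def] using
      (tendsto_const_nhds.div hden one_ne_zero).mono_left nhdsWithin_le_nhds
  refine tendsto_of_tendsto_of_tendsto_of_le_of_le' tendsto_const_nhds hbound ?_ ?_
  · filter_upwards [h] with T hT using (le_abs_self a).trans hT.1.le
  · filter_upwards [h, (hden.eventually (lt_mem_nhds one_pos)).filter_mono nhdsWithin_le_nhds]
      with T hT hpos
    rw [le_div_iff₀ hpos]
    exact hT.mul_one_sub_le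

lemma eventually_pos_mul_lt_one_nhdsGT_zero (a : ℝ) :
    ∀ᶠ T in 𝓝[>] (0 : ℝ), 0 < T ∧ a * T < 1 := by
  have : ∀ᶠ T in 𝓝 (0 : ℝ), a * T < 1 :=
    (continuous_const_mul a).tendsto' 0 0 (mul_zero a) |>.eventually (gt_mem_nhds one_pos)
  exact eventually_mem_nhdsWithin.and (this.filter_mono nhdsWithin_le_nhds)

theorem stmt4 (a : ℝ) (ku : ℝ → ℝ)
    (hku : ∀ T : ℝ, 0 < T → a * T < 1 →
      |a| < ku T ∧ T * Real.sqrt ((ku T) ^ 2 - a ^ 2) = Real.arccos (a / ku T)) :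
    (0 < a →
      Filter.Tendsto ku (nhdsWithin (1 / a) (Set.Iio (1 / a))) (nhds a) ∧
      Filter.Tendsto ku (nhdsWithin 0 (Set.Ioi 0)) Filter.atTop) ∧
    (a < 0 →
      Filter.Tendsto ku Filter.atTop (nhds |a|) ∧
      Filter.Tendsto ku (nhdsWithin 0 (Set.Ioi 0)) Filter.atTop) := by
  have root_of {l : Filter ℝ} (hl : ∀ᶠ T in l, 0 < T ∧ a * T < 1) :
      ∀ᶠ T in l, IsArccosRoot a T (ku T) := by
    filter_upwards [hl] with T hT using hku T hT.1 hT.2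
  have near_zero : Tendsto ku (𝓝[>] 0) atTop :=
    tendsto_atTop_of_isArccosRoot tendsto_inv_nhdsGT_zero
      (root_of (eventually_pos_mul_lt_one_nhdsGT_zero a))
  refine ⟨fun ha => ⟨tendsto_self_of_isArccosRoot ha (root_of ?_), near_zero⟩,
    fun ha => ⟨tendsto_abs_of_isArccosRoot (root_of ?_), near_zero⟩⟩
  · filter_upwards [Ioo_mem_nhdsLT (one_div_pos.2 ha)] with T hT
    exact ⟨hT.1, by rw [← lt_div_iff₀' ha]; exact hT.2⟩
  · filter_upwards [eventually_gt_atTop 0] with T hT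
    exact ⟨hT, (mul_neg_of_neg_of_pos ha hT).trans one_pos⟩
end

section
/- Fix T > 0 and a real number k. For a < −|k| define f_a(k) = (−k·sinh(ℓT) − ℓ) / (2ℓ·(a − k·cosh(ℓT))), where ℓ = √(a² − k²). Then lim_{a→−∞} 2|a|·f_a(k) = 1. -/
/-!
Put `ℓ = √(a² - k²)`, which tends to `∞` as `a → -∞`; since `|a| = √(ℓ² + k²)`,
`2|a| f_a(k) = (|a| / ℓ) · (k sinh ℓT + ℓ) / (|a| + k cosh ℓT)`.
The first factor tends to `1`. For `k ≠ 0`, dividing the second factor by `cosh ℓT` turns it into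
`(k tanh ℓT + ℓ / cosh ℓT) / (|a| / cosh ℓT + k) → k / k`; for `k = 0` it is `ℓ / |a|`,
the reciprocal of the first factor.
-/

open Real Filter Topology

lemma Real.exp_le_two_mul_cosh (y : ℝ) : exp y ≤ 2 * cosh y := by
  rw [cosh_eq]; linarith [exp_pos (-y)]

lemma Real.tendsto_id_div_cosh_atTop : Tendsto (fun y => y / cosh y) atTop (𝓝 0) := by
  have h := (tendsto_pow_mul_exp_neg_atTop_nhds_zero 1).const_mul 2
  rw [mul_zero] at h
  refine squeeze_zero' (eventually_ge_atTop 0 |>.mono fun y hy => div_nonneg hy (cosh_pos y).le)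
    (eventually_ge_atTop 0 |>.mono fun y hy => ?_) h
  calc y / cosh y ≤ y / (exp y / 2) :=
        div_le_div_of_nonneg_left hy (by positivity) (by linarith [exp_le_two_mul_cosh y])
    _ = 2 * (y ^ 1 * exp (-y)) := by rw [exp_neg]; field_simp

lemma Real.tendsto_tanh_atTop : Tendsto tanh atTop (𝓝 1) := by
  have h : ∀ y, tanh y = 1 - exp (-y) / cosh y := fun y => by
    rw [tanh_eq_sinh_div_cosh, ← cosh_sub_sinh, eq_sub_iff_add_eq, ← add_div,
      add_sub_cancel, div_self (cosh_pos y).ne']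
  have hsmall : Tendsto (fun y => exp (-y) / cosh y) atTop (𝓝 0) :=
    squeeze_zero (fun y => div_nonneg (exp_pos _).le (cosh_pos y).le)
      (fun y => div_le_self (exp_pos _).le (one_le_cosh y)) tendsto_exp_neg_atTop_nhds_zero
  rw [funext h]; simpa using hsmall.const_sub 1

lemma tendsto_sqrt_sq_add_div_self (c : ℝ) :
    Tendsto (fun x => √(x ^ 2 + c) / x) atTop (𝓝 1) := by
  have h : Tendsto (fun x : ℝ => √(1 + c / x ^ 2)) atTop (𝓝 1) := by
    simpa using ((tendsto_const_nhds.div_atTop (tendsto_pow_atTop two_ne_zero)).const_add 1).sqrt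
  refine h.congr' (eventually_gt_atTop 0 |>.mono fun x hx => ?_)
  rw [one_add_div (by positivity), sqrt_div' _ (sq_nonneg x), sqrt_sq hx.le]

lemma tendsto_mul_sinh_add_div_sqrt_add_mul_cosh {k T : ℝ} (hk : k ≠ 0) (hT : 0 < T) :
    Tendsto (fun x => (k * sinh (x * T) + x) / (√(x ^ 2 + k ^ 2) + k * cosh (x * T)))
      atTop (𝓝 1) := by
  have hxT : Tendsto (fun x => x * T) atTop atTop := tendsto_id.atTop_mul_const hT
  have hx : Tendsto (fun x => x / cosh (x * T)) atTop (𝓝 0) := by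
    have h := (tendsto_id_div_cosh_atTop.comp hxT).div_const T
    rw [zero_div] at h
    refine h.congr fun x => ?_
    simp only [Function.comp]
    field_simp
  have hr : Tendsto (fun x => √(x ^ 2 + k ^ 2) / cosh (x * T)) atTop (𝓝 0) := by
    have h := (tendsto_sqrt_sq_add_div_self (k ^ 2)).mul hx
    rw [one_mul] at h
    refine h.congr' (eventually_gt_atTop 0 |>.mono fun x hx => ?_)
    field_simp
  have h := ((((tendsto_tanh_atTop.comp hxT).const_mul k).add hx).div
    (hr.add_const k) (by simpa using hk))
  rw [mul_one, add_zero, zero_add, div_self hk] at h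
  refine h.congr fun x => ?_
  have hc := (cosh_pos (x * T)).ne'
  simp only [Pi.div_apply, Function.comp, tanh_eq_sinh_div_cosh]
  field_simp

lemma tendsto_sqrt_sq_add_div_self_mul_sinh_ratio (k : ℝ) {T : ℝ} (hT : 0 < T) :
    Tendsto (fun x => √(x ^ 2 + k ^ 2) / x *
      ((k * sinh (x * T) + x) / (√(x ^ 2 + k ^ 2) + k * cosh (x * T)))) atTop (𝓝 1) := by
  rcases eq_or_ne k 0 with rfl | hk
  · refine tendsto_const_nhds.congr' (eventually_gt_atTop 0 |>.mono fun x hx => ?_)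
    simp [sqrt_sq hx.le, hx.ne']
  · simpa using (tendsto_sqrt_sq_add_div_self (k ^ 2)).mul
      (tendsto_mul_sinh_add_div_sqrt_add_mul_cosh hk hT)

lemma tendsto_sqrt_sq_sub_atBot (k : ℝ) : Tendsto (fun a => √(a ^ 2 - k ^ 2)) atBot atTop := by
  refine tendsto_sqrt_atTop.comp (tendsto_atTop_add_const_right _ _ ?_)
  exact ((tendsto_pow_atTop two_ne_zero).comp tendsto_neg_atBot_atTop).congr neg_sq

theorem stmt7 (T k : ℝ) (hT : 0 < T) :
    Filter.Tendsto (fun a : ℝ =>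
      2 * |a| *
        ((-k * Real.sinh (Real.sqrt (a ^ 2 - k ^ 2) * T) - Real.sqrt (a ^ 2 - k ^ 2)) /
          (2 * Real.sqrt (a ^ 2 - k ^ 2) *
            (a - k * Real.cosh (Real.sqrt (a ^ 2 - k ^ 2) * T)))))
      Filter.atBot (nhds 1) := by
  refine ((tendsto_sqrt_sq_add_div_self_mul_sinh_ratio k hT).comp
    (tendsto_sqrt_sq_sub_atBot k)).congr' ?_
  filter_upwards [eventually_le_atBot (-|k|)] with a ha
  have ha_abs : |a| = -a := abs_of_nonpos (by linarith [abs_nonneg k])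
  have hsq : k ^ 2 ≤ a ^ 2 := sq_le_sq.mpr (by linarith)
  have hr : √(√(a ^ 2 - k ^ 2) ^ 2 + k ^ 2) = -a := by
    rw [sq_sqrt (sub_nonneg.mpr hsq), sub_add_cancel, sqrt_sq_eq_abs, ha_abs]
  set ℓ := √(a ^ 2 - k ^ 2)
  rw [Function.comp_apply, hr, ha_abs,
    show a - k * cosh (ℓ * T) = -(-a + k * cosh (ℓ * T)) by ring]
  -- `ring` does not factor inside the inverse of a sum, so the denominator is made an atom
  generalize -a + k * cosh (ℓ * T) = D
  ring
end

section
/- Let a ∈ ℝ and k > a. For T > 0 small (in particular a·T < 1 and k < k^u(a,T)), define f_{a,T}(k) = (−k·sinh(ℓT) − ℓ)/(2ℓ·(a − k·cosh(ℓT))) with ℓ = √(a² − k²) if |k| < −a; f_{a,T}(k) = T/4 + 1/(4|a|) if k = |a| and a ≠ 0; and f_{a,T}(k) = (−k·sin(ℓT) − ℓ)/(2ℓ·(a − k·cos(ℓT))) with ℓ = √(k² − a²) if k > |a|. Then lim_{T→0⁺} ( f_{a,T}(k) − 1/(2·(k − a)) ) / T = k/(2·(k − a)). -/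
open scoped Classical in
/-- The squared `L²`-norm of the fundamental solution of `dx/dt = a x(t) - k x(t-T)`,
for a stabilizing gain `k`. -/
noncomputable def fdel (T a k : ℝ) : ℝ :=
  if |k| < -a then
    (-k * Real.sinh (Real.sqrt (a ^ 2 - k ^ 2) * T) - Real.sqrt (a ^ 2 - k ^ 2)) /
      (2 * Real.sqrt (a ^ 2 - k ^ 2) *
        (a - k * Real.cosh (Real.sqrt (a ^ 2 - k ^ 2) * T)))
  else if k = |a| ∧ a ≠ 0 then T / 4 + 1 / (4 * |a|)
  else
    (-k * Real.sin (Real.sqrt (k ^ 2 - a ^ 2) * T) - Real.sqrt (k ^ 2 - a ^ 2)) /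
      (2 * Real.sqrt (k ^ 2 - a ^ 2) *
        (a - k * Real.cos (Real.sqrt (k ^ 2 - a ^ 2) * T)))

/-!
The limit is the right derivative at `T = 0` of `T ↦ fdel T a k`, whose value there is the
delay-free `1 / (2 (k - a))`. Off the boundary case `k = -a`, both closed forms read
`(-k s(ℓT) - ℓ) / (2ℓ (a - k c(ℓT)))` with `(s, c) = (sinh, cosh)` or `(sin, cos)`; as `c` is
even, the denominator is stationary at `0`, so the derivative is `-kℓ / (2ℓ (a - k))`.
On the boundary `fdel` is affine in `T` with slope `1 / 4 = k / (2 (k - a))`.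
-/

noncomputable def gainRatio (s c : ℝ → ℝ) (a k ℓ T : ℝ) : ℝ :=
  (-k * s (ℓ * T) - ℓ) / (2 * ℓ * (a - k * c (ℓ * T)))

section gainRatio

variable {s c : ℝ → ℝ} {a k ℓ : ℝ}

theorem gainRatio_zero (hs0 : s 0 = 0) (hc0 : c 0 = 1) (hℓ : ℓ ≠ 0) (hak : a ≠ k) :
    gainRatio s c a k ℓ 0 = 1 / (2 * (k - a)) := by
  have : k - a ≠ 0 := sub_ne_zero.mpr hak.symm
  have : a - k ≠ 0 := sub_ne_zero.mpr hak
  simp only [gainRatio, mul_zero, hs0, hc0]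
  field_simp
  ring

theorem hasDerivAt_gainRatio_zero (hs : HasDerivAt s 1 0) (hc : HasDerivAt c 0 0)
    (hc0 : c 0 = 1) (hℓ : ℓ ≠ 0) (hak : a ≠ k) :
    HasDerivAt (gainRatio s c a k ℓ) (k / (2 * (k - a))) 0 := by
  have hlin : HasDerivAt (ℓ * ·) ℓ 0 := by simpa using (hasDerivAt_id (0 : ℝ)).const_mul ℓ
  have hs' : HasDerivAt (fun T => s (ℓ * T)) (1 * ℓ) 0 := hs.comp_of_eq 0 hlin (mul_zero ℓ).symm
  have hc' : HasDerivAt (fun T => c (ℓ * T)) (0 * ℓ) 0 := hc.comp_of_eq 0 hlin (mul_zero ℓ).symm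
  have hden : 2 * ℓ * (a - k * c (ℓ * 0)) ≠ 0 := by
    simpa [hc0, hℓ, sub_eq_zero] using hak
  have hnum := (hs'.const_mul (-k)).sub_const ℓ
  refine (hnum.div (((hc'.const_mul k).const_sub a).const_mul (2 * ℓ)) hden).congr_deriv ?_
  have : k - a ≠ 0 := sub_ne_zero.mpr hak.symm
  have : a - k ≠ 0 := sub_ne_zero.mpr hak
  simp only [mul_zero, zero_mul, one_mul, hc0, neg_zero]
  field_simp
  ring

end gainRatio

section fdel

variable {T a k : ℝ}

theorem fdel_of_abs_lt_neg (h : |k| < -a) :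
    fdel T a k = gainRatio Real.sinh Real.cosh a k √(a ^ 2 - k ^ 2) T := by
  simp only [fdel, if_pos h, gainRatio]

theorem fdel_neg_self (ha : a < 0) : fdel T a (-a) = T / 4 + 1 / (4 * |a|) := by
  have : ¬|-a| < -a := by simp [abs_of_neg ha]
  simp only [fdel, if_neg this, abs_of_neg ha, ha.ne, if_pos, ne_eq, not_false_eq_true, and_self]

theorem fdel_of_abs_lt (h : |a| < k) :
    fdel T a k = gainRatio Real.sin Real.cos a k √(k ^ 2 - a ^ 2) T := by
  have h₁ : ¬|k| < -a := by
    have := neg_abs_le a; rw [abs_of_pos ((abs_nonneg a).trans_lt h)]; linarith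
  have h₂ : ¬(k = |a| ∧ a ≠ 0) := fun h' => h.ne' h'.1
  simp only [fdel, if_neg h₁, if_neg h₂, gainRatio]

theorem abs_lt_neg_or_eq_neg_or_abs_lt (hk : a < k) :
    |k| < -a ∨ (a < 0 ∧ k = -a) ∨ |a| < k := by
  rcases lt_trichotomy k (-a) with h | h | h
  · exact Or.inl (abs_lt.mpr ⟨by linarith, h⟩)
  · exact Or.inr (Or.inl ⟨by linarith, h⟩)
  · exact Or.inr (Or.inr (abs_lt.mpr ⟨by linarith, hk⟩))

theorem fdel_zero_and_hasDerivAt_zero (hk : a < k) :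
    fdel 0 a k = 1 / (2 * (k - a)) ∧
      HasDerivAt (fun T => fdel T a k) (k / (2 * (k - a))) 0 := by
  rcases abs_lt_neg_or_eq_neg_or_abs_lt hk with h | ⟨ha, rfl⟩ | h
  · obtain ⟨h₁, h₂⟩ := abs_lt.mp h
    have hℓ : √(a ^ 2 - k ^ 2) ≠ 0 := Real.sqrt_ne_zero'.mpr (by nlinarith)
    simp only [fdel_of_abs_lt_neg h]
    exact ⟨gainRatio_zero Real.sinh_zero Real.cosh_zero hℓ hk.ne,
      hasDerivAt_gainRatio_zero (by simpa using Real.hasDerivAt_sinh 0)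
        (by simpa using Real.hasDerivAt_cosh 0) Real.cosh_zero hℓ hk.ne⟩
  · have ha' : a ≠ 0 := ha.ne
    simp only [fdel_neg_self ha, abs_of_neg ha]
    refine ⟨?_, ((hasDerivAt_id' 0).div_const 4 |>.add_const _).congr_deriv ?_⟩
    all_goals field_simp; ring
  · obtain ⟨h₁, h₂⟩ := abs_lt.mp h
    have hℓ : √(k ^ 2 - a ^ 2) ≠ 0 := Real.sqrt_ne_zero'.mpr (by nlinarith)
    simp only [fdel_of_abs_lt h]
    exact ⟨gainRatio_zero Real.sin_zero Real.cos_zero hℓ hk.ne,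
      hasDerivAt_gainRatio_zero (by simpa using Real.hasDerivAt_sin 0)
        (by simpa using Real.hasDerivAt_cos 0) Real.cos_zero hℓ hk.ne⟩

end fdel

theorem stmt13 (a k : ℝ) (hk : a < k) :
    Filter.Tendsto (fun T : ℝ => (fdel T a k - 1 / (2 * (k - a))) / T)
      (nhdsWithin 0 (Set.Ioi (0 : ℝ))) (nhds (k / (2 * (k - a)))) := by
  obtain ⟨hzero, hderiv⟩ := fdel_zero_and_hasDerivAt_zero hk
  refine hderiv.tendsto_slope_zero_right.congr fun T => ?_
  simp only [zero_add, hzero, smul_eq_mul, div_eq_inv_mul]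
end

section
/- Let a < 0 and T > 0. On the interval (−|a|, |a|) define f(k) = (−k·sinh(ℓT) − ℓ)/(2ℓ·(a − k·cosh(ℓT))), where ℓ = √(a² − k²). Then f(0) = −1/(2a) = 1/(2|a|), the first derivative of f at k = 0 equals −e^{T·a}/(2a²), and the second derivative of f at k = 0 equals (e^{2T·a} + 1)/(2|a|³). -/
/-!
Dividing numerator and denominator by `-ℓ` writes `f = (1 + k S) / (2 (k C - a))` with
`S = sinh (ℓ T) / ℓ` and `C = cosh (ℓ T)`, both smooth functions of `ℓ² = a² - k²` near
`k = 0`. A term `k P (a² - k²)` has the even derivative `P (a² - k²) - 2 k² P' (a² - k²)`,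
whose own derivative vanishes at `0`. So numerator `g` and denominator `h` have zero second
derivative at `0`, and `f''(0)` is the cross term `-2 h'(0) (g'(0) h(0) - g(0) h'(0)) / h(0)³`
of the quotient rule, with `g(0) = 1`, `h(0) = -2a`, `g'(0) = sinh (a T) / a` and
`h'(0) = 2 cosh (a T)`.
-/

open Real Filter Topology

theorem hasDerivAt_deriv_div {g h g' h' : ℝ → ℝ} {g'' h'' x : ℝ}
    (hg : ∀ᶠ y in 𝓝 x, HasDerivAt g (g' y) y)
    (hh : ∀ᶠ y in 𝓝 x, HasDerivAt h (h' y) y)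
    (hg' : HasDerivAt g' g'' x) (hh' : HasDerivAt h' h'' x) (hx : h x ≠ 0) :
    HasDerivAt (deriv fun y => g y / h y)
      ((g'' * h x - g x * h'') / h x ^ 2 - 2 * h' x * (g' x * h x - g x * h' x) / h x ^ 3) x := by
  have hg₀ := hg.self_of_nhds
  have hh₀ := hh.self_of_nhds
  have hderiv : (deriv fun y => g y / h y) =ᶠ[𝓝 x]
      fun y => (g' y * h y - g y * h' y) / h y ^ 2 := by
    filter_upwards [hg, hh, hh₀.continuousAt.eventually_ne hx] with y hgy hhy hy
    exact (hgy.div hhy hy).deriv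
  refine HasDerivAt.congr_of_eventuallyEq ?_ hderiv
  refine (((hg'.mul hh₀).sub (hg₀.mul hh')).div (hh₀.pow 2)
    (pow_ne_zero 2 hx)).congr_deriv ?_
  simp only [Pi.mul_apply, Pi.sub_apply, Pi.pow_apply]
  field_simp
  ring

noncomputable def mulCompSubSqDeriv (P P' : ℝ → ℝ) (c k : ℝ) : ℝ :=
  P (c - k ^ 2) - 2 * k ^ 2 * P' (c - k ^ 2)

@[simp]
theorem mulCompSubSqDeriv_zero (P P' : ℝ → ℝ) (c : ℝ) :
    mulCompSubSqDeriv P P' c 0 = P c := by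
  simp [mulCompSubSqDeriv]

theorem hasDerivAt_mul_comp_const_sub_sq {P P' : ℝ → ℝ} {c k : ℝ}
    (hP : HasDerivAt P (P' (c - k ^ 2)) (c - k ^ 2)) :
    HasDerivAt (fun k => k * P (c - k ^ 2)) (mulCompSubSqDeriv P P' c k) k := by
  refine ((hasDerivAt_id k).mul (hP.comp k ((hasDerivAt_pow 2 k).const_sub c))).congr_deriv ?_
  simp only [mulCompSubSqDeriv, id, Function.comp_apply]
  ring

theorem hasDerivAt_mulCompSubSqDeriv_zero {P P' : ℝ → ℝ} {c : ℝ}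
    (hP : HasDerivAt P (P' c) c) (hP' : DifferentiableAt ℝ P' c) :
    HasDerivAt (mulCompSubSqDeriv P P' c) 0 0 := by
  have hsq : HasDerivAt (fun k : ℝ => c - k ^ 2) 0 0 := by
    simpa using (hasDerivAt_pow 2 (0 : ℝ)).const_sub c
  have hP₀ : HasDerivAt P (P' (c - 0 ^ 2)) (c - 0 ^ 2) := by simpa using hP
  have hP'₀ : HasDerivAt P' (deriv P' (c - 0 ^ 2)) (c - 0 ^ 2) := by simpa using hP'.hasDerivAt
  refine ((hP₀.comp 0 hsq).sub
    (((hasDerivAt_pow 2 (0 : ℝ)).const_mul 2).mul (hP'₀.comp 0 hsq))).congr_deriv ?_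
  simp

noncomputable def coshSqrt (T u : ℝ) : ℝ := cosh (√u * T)

noncomputable def sinhSqrtDiv (T u : ℝ) : ℝ := sinh (√u * T) / √u

theorem hasDerivAt_coshSqrt {T u : ℝ} (hu : 0 < u) :
    HasDerivAt (coshSqrt T) (T / 2 * sinhSqrtDiv T u) u := by
  refine ((hasDerivAt_sqrt hu.ne').mul_const T).cosh.congr_deriv ?_
  unfold sinhSqrtDiv
  field_simp

noncomputable def sinhSqrtDivDeriv (T u : ℝ) : ℝ :=
  (T * coshSqrt T u - sinhSqrtDiv T u) / (2 * u)

theorem hasDerivAt_sinhSqrtDiv {T u : ℝ} (hu : 0 < u) :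
    HasDerivAt (sinhSqrtDiv T) (sinhSqrtDivDeriv T u) u := by
  have hs : √u ≠ 0 := (sqrt_pos.2 hu).ne'
  have hsq := hasDerivAt_sqrt hu.ne'
  refine (((hsq.mul_const T).sinh).div hsq hs).congr_deriv ?_
  unfold sinhSqrtDivDeriv sinhSqrtDiv coshSqrt
  rw [sq_sqrt hu.le]
  field_simp

@[simp]
theorem coshSqrt_sq (T a : ℝ) : coshSqrt T (a ^ 2) = cosh (a * T) := by
  rcases abs_choice a with h | h <;> simp [coshSqrt, sqrt_sq_eq_abs, h]

@[simp]
theorem sinhSqrtDiv_sq (T a : ℝ) : sinhSqrtDiv T (a ^ 2) = sinh (a * T) / a := by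
  rcases abs_choice a with h | h <;> simp [sinhSqrtDiv, sqrt_sq_eq_abs, h, neg_div_neg_eq]

theorem differentiableAt_sinhSqrtDivDeriv {T u : ℝ} (hu : 0 < u) :
    DifferentiableAt ℝ (sinhSqrtDivDeriv T) u :=
  (((hasDerivAt_coshSqrt hu).differentiableAt.const_mul T).sub
    (hasDerivAt_sinhSqrtDiv hu).differentiableAt).div (differentiableAt_id.const_mul 2)
    (by positivity)

noncomputable def fundSolNormSq (a T k : ℝ) : ℝ :=
  (-k * sinh (√(a ^ 2 - k ^ 2) * T) - √(a ^ 2 - k ^ 2)) /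
    (2 * √(a ^ 2 - k ^ 2) * (a - k * cosh (√(a ^ 2 - k ^ 2) * T)))

noncomputable def fundSolNumer (a T k : ℝ) : ℝ := 1 + k * sinhSqrtDiv T (a ^ 2 - k ^ 2)

noncomputable def fundSolDenom (a T k : ℝ) : ℝ := 2 * (k * coshSqrt T (a ^ 2 - k ^ 2) - a)

noncomputable def fundSolNumerDeriv (a T k : ℝ) : ℝ :=
  mulCompSubSqDeriv (sinhSqrtDiv T) (sinhSqrtDivDeriv T) (a ^ 2) k

noncomputable def fundSolDenomDeriv (a T k : ℝ) : ℝ :=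
  2 * mulCompSubSqDeriv (coshSqrt T) (fun u => T / 2 * sinhSqrtDiv T u) (a ^ 2) k

section FundSol

variable {a T : ℝ}

theorem fundSolNormSq_eq {k : ℝ} (hk : 0 < a ^ 2 - k ^ 2) :
    fundSolNormSq a T k = fundSolNumer a T k / fundSolDenom a T k := by
  have hl : √(a ^ 2 - k ^ 2) ≠ 0 := (sqrt_pos.2 hk).ne'
  rw [fundSolNormSq, fundSolNumer, fundSolDenom, sinhSqrtDiv, coshSqrt,
    ← mul_div_mul_left (1 + _) (2 * _) (neg_ne_zero.2 hl)]
  congr 1 <;> field_simp <;> ring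

@[simp]
theorem fundSolNumer_zero : fundSolNumer a T 0 = 1 := by simp [fundSolNumer]

@[simp]
theorem fundSolDenom_zero : fundSolDenom a T 0 = -(2 * a) := by simp [fundSolDenom]

@[simp]
theorem fundSolNumerDeriv_zero : fundSolNumerDeriv a T 0 = sinh (a * T) / a := by
  simp [fundSolNumerDeriv]

@[simp]
theorem fundSolDenomDeriv_zero : fundSolDenomDeriv a T 0 = 2 * cosh (a * T) := by
  simp [fundSolDenomDeriv]

theorem eventually_sub_sq_pos (ha : a ≠ 0) : ∀ᶠ k in 𝓝 (0 : ℝ), 0 < a ^ 2 - k ^ 2 :=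
  ((by fun_prop : Continuous fun k : ℝ => a ^ 2 - k ^ 2).tendsto 0).eventually_const_lt
    (by simpa using pow_two_pos_of_ne_zero ha)

theorem fundSolNormSq_eventuallyEq (ha : a ≠ 0) :
    fundSolNormSq a T =ᶠ[𝓝 0] fun k => fundSolNumer a T k / fundSolDenom a T k := by
  filter_upwards [eventually_sub_sq_pos ha] with k hk
  exact fundSolNormSq_eq hk

theorem eventually_hasDerivAt_fundSolNumer (ha : a ≠ 0) :
    ∀ᶠ k in 𝓝 (0 : ℝ), HasDerivAt (fundSolNumer a T) (fundSolNumerDeriv a T k) k := by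
  filter_upwards [eventually_sub_sq_pos ha] with k hk
  exact (hasDerivAt_mul_comp_const_sub_sq (hasDerivAt_sinhSqrtDiv hk)).const_add 1

theorem eventually_hasDerivAt_fundSolDenom (ha : a ≠ 0) :
    ∀ᶠ k in 𝓝 (0 : ℝ), HasDerivAt (fundSolDenom a T) (fundSolDenomDeriv a T k) k := by
  filter_upwards [eventually_sub_sq_pos ha] with k hk
  exact ((hasDerivAt_mul_comp_const_sub_sq (hasDerivAt_coshSqrt hk)).sub_const a).const_mul 2

theorem hasDerivAt_fundSolNumerDeriv_zero (ha : a ≠ 0) :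
    HasDerivAt (fundSolNumerDeriv a T) 0 0 :=
  hasDerivAt_mulCompSubSqDeriv_zero (hasDerivAt_sinhSqrtDiv (by positivity))
    (differentiableAt_sinhSqrtDivDeriv (by positivity))

theorem hasDerivAt_fundSolDenomDeriv_zero (ha : a ≠ 0) :
    HasDerivAt (fundSolDenomDeriv a T) 0 0 :=
  ((hasDerivAt_mulCompSubSqDeriv_zero (hasDerivAt_coshSqrt (by positivity))
    ((hasDerivAt_sinhSqrtDiv (by positivity)).differentiableAt.const_mul _)).const_mul
      2).congr_deriv (mul_zero 2)

end FundSol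

theorem stmt14_general (a T : ℝ) (ha : a < 0)
    (f : ℝ → ℝ)
    (hf : ∀ k : ℝ, f k =
      (-k * Real.sinh (Real.sqrt (a ^ 2 - k ^ 2) * T) - Real.sqrt (a ^ 2 - k ^ 2)) /
        (2 * Real.sqrt (a ^ 2 - k ^ 2) *
          (a - k * Real.cosh (Real.sqrt (a ^ 2 - k ^ 2) * T)))) :
    f 0 = -1 / (2 * a) ∧ (-1 / (2 * a) : ℝ) = 1 / (2 * |a|) ∧
    HasDerivAt f (-Real.exp (T * a) / (2 * a ^ 2)) 0 ∧
    HasDerivAt (deriv f) ((Real.exp (2 * T * a) + 1) / (2 * |a| ^ 3)) 0 := by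
  obtain rfl : f = fundSolNormSq a T := funext hf
  have hq := fundSolNormSq_eventuallyEq (T := T) ha.ne
  have hg := eventually_hasDerivAt_fundSolNumer (T := T) ha.ne
  have hh := eventually_hasDerivAt_fundSolDenom (T := T) ha.ne
  have hden : fundSolDenom a T 0 ≠ 0 := by simp [ha.ne]
  refine ⟨?_, ?_, ?_, ?_⟩
  · simp only [hq.eq_of_nhds, fundSolNumer_zero, fundSolDenom_zero]
    ring
  · rw [abs_of_neg ha]
    field_simp
  · refine ((hg.self_of_nhds.div hh.self_of_nhds hden).congr_of_eventuallyEq hq).congr_deriv ?_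
    simp only [fundSolNumer_zero, fundSolDenom_zero, fundSolNumerDeriv_zero,
      fundSolDenomDeriv_zero]
    rw [sinh_eq, cosh_eq, mul_comm a T, exp_neg]
    field_simp [ha.ne]
    ring
  · refine ((hasDerivAt_deriv_div hg hh (hasDerivAt_fundSolNumerDeriv_zero ha.ne)
      (hasDerivAt_fundSolDenomDeriv_zero ha.ne) hden).congr_of_eventuallyEq hq.deriv).congr_deriv ?_
    simp only [fundSolNumer_zero, fundSolDenom_zero, fundSolNumerDeriv_zero,
      fundSolDenomDeriv_zero]
    rw [sinh_eq, cosh_eq, mul_comm a T, exp_neg, abs_of_neg ha,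
      show 2 * T * a = T * a + T * a by ring, exp_add]
    field_simp [ha.ne]
    ring

theorem stmt14 (a T : ℝ) (ha : a < 0) (hT : 0 < T)
    (f : ℝ → ℝ)
    (hf : ∀ k : ℝ, f k =
      (-k * Real.sinh (Real.sqrt (a ^ 2 - k ^ 2) * T) - Real.sqrt (a ^ 2 - k ^ 2)) /
        (2 * Real.sqrt (a ^ 2 - k ^ 2) *
          (a - k * Real.cosh (Real.sqrt (a ^ 2 - k ^ 2) * T)))) :
    f 0 = -1 / (2 * a) ∧ (-1 / (2 * a) : ℝ) = 1 / (2 * |a|) ∧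
    HasDerivAt f (-Real.exp (T * a) / (2 * a ^ 2)) 0 ∧
    HasDerivAt (deriv f) ((Real.exp (2 * T * a) + 1) / (2 * |a| ^ 3)) 0 :=
  stmt14_general a T ha f hf
end
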